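/- arXiv:1211.4431 — 3 statements merged into one kernel-verified Lean document; each statement's English description precedes it below -/
import Mathlib

section
/- The inverse exp_LT of log_LT, written exp_LT(T) = Σ_{k≥1} e_k T^k, has coefficients satisfying v_p(e_k) ≥ -k/(q-1). -/
/-!
Comparing coefficients of `T^n` in `p • E + E^q = E(pT)` gives `(p^n - p) e_n = [T^n] E^q`.
For `n ≥ 2` the factor `p^n - p` has norm `1/p`, and writing `E = T · G`, the coefficient
`[T^n] E^q = [T^(n-q)] G^q` only involves `e_1, …, e_(n-1)`; by the ultrametric inequality the
bound `‖e_(k+1)‖ ≤ r^k` with `r^(q-1) = p` passes from `G` to `G^q` and then to `e_n`.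
-/

open PowerSeries

namespace PowerSeries

theorem norm_coeff_mul_le_pow {R : Type*} [NormedRing R] [IsUltrametricDist R] {r : ℝ} {N : ℕ}
    {f g : R⟦X⟧} (hr : 0 ≤ r) (hf : ∀ k ≤ N, ‖coeff k f‖ ≤ r ^ k)
    (hg : ∀ k ≤ N, ‖coeff k g‖ ≤ r ^ k) : ∀ k ≤ N, ‖coeff k (f * g)‖ ≤ r ^ k := by
  intro k hk
  rw [coeff_mul]
  refine IsUltrametricDist.norm_sum_le_of_forall_le_of_nonneg (pow_nonneg hr k) fun ij hij => ?_
  rw [Finset.HasAntidiagonal.mem_antidiagonal] at hij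
  calc ‖coeff ij.1 f * coeff ij.2 g‖ ≤ ‖coeff ij.1 f‖ * ‖coeff ij.2 g‖ := norm_mul_le _ _
    _ ≤ r ^ ij.1 * r ^ ij.2 :=
      mul_le_mul (hf _ (by omega)) (hg _ (by omega)) (norm_nonneg _) (pow_nonneg hr _)
    _ = r ^ k := by rw [← pow_add, hij]

theorem norm_coeff_pow_le_pow {R : Type*} [NormedRing R] [NormOneClass R] [IsUltrametricDist R]
    {r : ℝ} {N : ℕ} {f : R⟦X⟧} (hr : 0 ≤ r) (hf : ∀ k ≤ N, ‖coeff k f‖ ≤ r ^ k) (n : ℕ) :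
    ∀ k ≤ N, ‖coeff k (f ^ n)‖ ≤ r ^ k := by
  induction n with
  | zero =>
    intro k _
    rw [pow_zero, coeff_one]
    split_ifs with hk
    · simp [hk]
    · simpa using pow_nonneg hr k
  | succ n ih => rw [pow_succ]; exact norm_coeff_mul_le_pow hr ih hf

end PowerSeries

theorem norm_pow_sub_self_of_norm_lt_one {K : Type*} [NormedField K] [IsUltrametricDist K]
    {x : K} (hx : ‖x‖ < 1) {n : ℕ} (hn : 2 ≤ n) : ‖x ^ n - x‖ = ‖x‖ := by
  have hsmall : ‖x ^ (n - 1)‖ < ‖(-1 : K)‖ := by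
    rw [norm_neg, norm_one, norm_pow]
    exact pow_lt_one₀ (norm_nonneg x) hx (by omega)
  have hunit : ‖x ^ (n - 1) + -1‖ = 1 := by
    rw [IsUltrametricDist.norm_add_eq_max_of_norm_ne_norm hsmall.ne, max_eq_right hsmall.le,
      norm_neg, norm_one]
  have hfac : x ^ n - x = x * (x ^ (n - 1) + -1) := by
    rw [mul_add, ← pow_succ', Nat.sub_add_cancel (by omega : 1 ≤ n)]; ring
  rw [hfac, norm_mul, hunit, mul_one]

namespace Padic

variable {p : ℕ} [Fact p.Prime]

theorem norm_natCast_pow_sub_self {n : ℕ} (hn : 2 ≤ n) : ‖(p : ℚ_[p]) ^ n - p‖ = (p : ℝ)⁻¹ := by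
  have hp : ‖(p : ℚ_[p])‖ < 1 := by
    rw [norm_p]
    exact inv_lt_one_of_one_lt₀ (by exact_mod_cast (Fact.out : p.Prime).one_lt)
  rw [norm_pow_sub_self_of_norm_lt_one hp hn, norm_p]

theorem neg_div_le_valuation_of_norm_pow_le {x : ℚ_[p]} {d k : ℕ} (hd : 0 < d)
    (h : ‖x‖ ^ d ≤ (p : ℝ) ^ k) : -((k : ℚ) / d) ≤ x.valuation := by
  rcases eq_or_ne x 0 with rfl | hx
  · rw [valuation_zero, Int.cast_zero, neg_nonpos]
    positivity
  have hp : (1 : ℝ) < p := by exact_mod_cast (Fact.out : p.Prime).one_lt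
  rw [norm_eq_zpow_neg_valuation hx, ← zpow_natCast, ← zpow_mul, ← zpow_natCast,
    zpow_le_zpow_iff_right₀ hp] at h
  rw [neg_le, le_div_iff₀ (by exact_mod_cast hd)]
  exact_mod_cast h

end Padic

namespace LubinTate

variable {p : ℕ} [Fact p.Prime] {q : ℕ} {E : ℚ_[p]⟦X⟧}

theorem sub_mul_coeff_eq_coeff_pow
    (hfe : (p : ℚ_[p]) • E + E ^ q = rescale (p : ℚ_[p]) E) (n : ℕ) :
    ((p : ℚ_[p]) ^ n - p) * coeff n E = coeff n (E ^ q) := by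
  have := congrArg (coeff n) hfe
  rw [map_add, coeff_rescale, map_smul, smul_eq_mul] at this
  linear_combination -this

theorem norm_coeff_succ_le (hq : 2 ≤ q) {r : ℝ} (hr0 : 0 ≤ r) (hr : r ^ (q - 1) = p)
    (h0 : constantCoeff E = 0) (h1 : coeff 1 E = 1)
    (hfe : (p : ℚ_[p]) • E + E ^ q = rescale (p : ℚ_[p]) E) (n : ℕ) :
    ‖coeff (n + 1) E‖ ≤ r ^ n := by
  set G : ℚ_[p]⟦X⟧ := mk fun k => coeff (k + 1) E
  have hEG : E ^ q = X ^ q * G ^ q := by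
    rw [← mul_pow]
    conv_lhs => rw [eq_X_mul_shift_add_const E, h0, map_zero, add_zero]
  induction n using Nat.strong_induction_on with
  | _ n ih =>
  match n with
  | 0 => simp [h1]
  | m + 1 =>
    have hG : ∀ k ≤ m, ‖coeff k (G ^ q)‖ ≤ r ^ k :=
      norm_coeff_pow_le_pow hr0 (fun k hk => by simpa [G] using ih k (by omega)) q
    have hpow : ‖coeff (m + 2) (E ^ q)‖ * r ^ (q - 1) ≤ r ^ (m + 1) := by
      rw [hEG, coeff_X_pow_mul']
      split_ifs with hqm
      · calc ‖coeff (m + 2 - q) (G ^ q)‖ * r ^ (q - 1) ≤ r ^ (m + 2 - q) * r ^ (q - 1) := by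
              gcongr; exact hG _ (by omega)
          _ = r ^ (m + 1) := by rw [← pow_add]; congr 1; omega
      · simpa using pow_nonneg hr0 _
    have hnorm : ‖coeff (m + 2) E‖ = ‖coeff (m + 2) (E ^ q)‖ * p := by
      rw [← sub_mul_coeff_eq_coeff_pow hfe, norm_mul, Padic.norm_natCast_pow_sub_self (by omega)]
      have : (p : ℝ) ≠ 0 := by exact_mod_cast (Fact.out : p.Prime).ne_zero
      field_simp
    rw [hnorm, ← hr]
    exact hpow

end LubinTate

/-- The inverse `exp_LT` of the Lubin–Tate logarithm — characterized as the
power series with `exp_LT(0) = 0`, linear coefficient `1`, and functional equation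
`[p](exp_LT(T)) = exp_LT(pT)`, i.e. `p·exp_LT + exp_LT^q = exp_LT(pT)` — written
`exp_LT(T) = Σ_{k ≥ 1} e_k T^k`, has coefficients satisfying `v_p(e_k) ≥ -k/(q-1)`. -/
theorem stmt3 (p h q : ℕ) [Fact p.Prime] (hh : 1 ≤ h) (hq : q = p ^ h)
    (expLT : PowerSeries ℚ_[p])
    (hexp0 : PowerSeries.constantCoeff expLT = 0)
    (hexp1 : PowerSeries.coeff 1 expLT = 1)
    (hexpfe : (p : ℚ_[p]) • expLT + expLT ^ q = PowerSeries.rescale (p : ℚ_[p]) expLT) :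
    ∀ k : ℕ, -((k : ℚ) / ((q : ℚ) - 1)) ≤ ((PowerSeries.coeff k expLT).valuation : ℚ) := by
  have hp : p.Prime := Fact.out
  have hq2 : 2 ≤ q := hq ▸ hp.two_le.trans (Nat.le_self_pow (by omega) p)
  set r : ℝ := (p : ℝ) ^ ((q - 1 : ℕ) : ℝ)⁻¹
  have hr : r ^ (q - 1) = p := Real.rpow_inv_natCast_pow (Nat.cast_nonneg p) (by omega)
  have hr1 : 1 ≤ r := Real.one_le_rpow (by exact_mod_cast hp.one_le) (by positivity)
  have hbound : ∀ k, ‖coeff k expLT‖ ≤ r ^ k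
    | 0 => by simp [hexp0]
    | n + 1 => (LubinTate.norm_coeff_succ_le hq2 (by positivity) hr hexp0 hexp1 hexpfe n).trans
        (pow_le_pow_right₀ hr1 n.le_succ)
  intro k
  rw [show (q : ℚ) - 1 = ((q - 1 : ℕ) : ℚ) by push_cast [Nat.cast_sub (by omega : 1 ≤ q)]; ring]
  refine Padic.neg_div_le_valuation_of_norm_pow_le (by omega) ?_
  rw [← hr, ← pow_mul, mul_comm, pow_mul]
  exact pow_le_pow_left₀ (norm_nonneg _) (hbound k) _
end

section
/- A homogeneous polynomial of degree m in h-1 variables with coefficients in C_p that vanishes at (σ^1(a),…,σ^{h-1}(a)) for all a in a neighborhood of 0 in O_F is identically zero. -/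
/-!
For `a ∈ F` put `v(a) = (σ a, …, σ^{h-1} a) ∈ L^{h-1}`. These vectors span `L^{h-1}` over `L`:
an `L`-linear form vanishing on all of them is a linear relation between the distinct
characters `σ, …, σ^{h-1}`, so it is zero by Dedekind–Artin. Given `y = ∑ c_j v(a_j)`, the
polynomial `t ↦ P (∑ t_j v(a_j))` vanishes whenever the `t_j` are small elements of `ℚ_p`,
because `v` is `ℚ_p`-linear and `∑ t_j a_j` is then close to `0`; a polynomial vanishing on a box
with infinite sides is zero, so `P y = 0`.
-/

open MvPolynomial Filter Topology

theorem Submodule.span_range_monoidHom_eval_eq_top {G L κ : Type*} [Monoid G] [Field L]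
    [Fintype κ] {f : κ → G →* L} (hf : Function.Injective f) :
    Submodule.span L (Set.range fun (a : G) (i : κ) => f i a) = ⊤ := by
  classical
  by_contra hne
  obtain ⟨φ, hφ, hmap⟩ :=
    Submodule.exists_dual_map_eq_bot_of_lt_top (lt_top_iff_ne_top.2 hne) inferInstance
  have hvanish (a : G) : φ (fun i => f i a) = 0 := by
    exact LinearMap.le_ker_iff_map.2 hmap (Submodule.subset_span ⟨a, rfl⟩)
  have hcoef : ∀ i, φ (fun j => if i = j then 1 else 0) = 0 := by
    have hli := (linearIndependent_monoidHom G L).comp f hf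
    rw [Fintype.linearIndependent_iff] at hli
    refine hli _ (funext fun a => ?_)
    simpa [φ.pi_apply_eq_sum_univ (fun i => f i a), mul_comm] using hvanish a
  exact hφ (LinearMap.ext fun v => by simp [φ.pi_apply_eq_sum_univ v, hcoef])

theorem MvPolynomial.eval_sum_smul_eq_zero_of_forall_mem_pi {L κ ι : Type*} [CommRing L]
    [IsDomain L]
    [Fintype ι] {P : MvPolynomial κ L} (v : ι → κ → L) {S : ι → Set L}
    (hS : ∀ j, (S j).Infinite) (hP : ∀ t ∈ Set.univ.pi S, eval (∑ j, t j • v j) P = 0)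
    (t : ι → L) : eval (∑ j, t j • v j) P = 0 := by
  let Q : MvPolynomial ι L := bind₁ (fun k => ∑ j, X j * C (v j k)) P
  have hQ (t : ι → L) : eval t Q = eval (∑ j, t j • v j) P := by
    rw [show eval t Q = eval (fun k => eval t (∑ j, X j * C (v j k))) P from
      eval₂Hom_bind₁ _ _ _ _]
    congr 2 with k
    simp
  have hQ0 : Q = 0 := funext_set S hS fun t ht => by simpa [hQ] using hP t ht
  rw [← hQ, hQ0, map_zero]

theorem MvPolynomial.eval_eq_zero_of_mem_span_of_eventually {K F L κ : Type*}
    [NontriviallyNormedField K] [Semiring F] [TopologicalSpace F] [ContinuousAdd F]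
    [Algebra K F] [ContinuousSMul K F] [CommRing L] [IsDomain L] [Algebra K L] (g : κ → F →ₐ[K] L) {P : MvPolynomial κ L}
    (hP : ∀ᶠ a in 𝓝 0, eval (fun i => g i a) P = 0) {y : κ → L}
    (hy : y ∈ Submodule.span L (Set.range fun (a : F) (i : κ) => g i a)) :
    eval y P = 0 := by
  obtain ⟨n, c, w, rfl⟩ := Submodule.mem_span_set'.1 hy
  choose a ha using fun j => (w j).2
  have hcomb : Tendsto (fun s : Fin n → K => ∑ j, s j • a j) (𝓝 0) (𝓝 0) := by
    have hcont : Continuous fun s : Fin n → K => ∑ j, s j • a j := by fun_prop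
    simpa using hcont.tendsto 0
  have hbox := hcomb hP
  rw [nhds_pi, mem_map, mem_pi'] at hbox
  obtain ⟨I, U, hU, hUP⟩ := hbox
  refine eval_sum_smul_eq_zero_of_forall_mem_pi _
    (fun j => (infinite_of_mem_nhds _ (hU j)).image (algebraMap K L).injective.injOn)
    (fun t ht => ?_) c
  choose s hsU hst using fun j => ht j trivial
  have hsum : ∑ j, t j • (w j : κ → L) = fun i => g i (∑ j, s j • a j) := by
    ext i
    simp [← ha, ← hst, Algebra.smul_def]
  exact hsum ▸ hUP fun j _ => hsU j

theorem stmt10_general (p : ℕ) [Fact p.Prime] (h : ℕ)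
    (F : Type*) [NormedField F] [NormedAlgebra ℚ_[p] F]
    (σ : F ≃ₐ[ℚ_[p]] F) (hord : orderOf σ = h)
    (L : Type*) [Field L] [Algebra F L]
    (P : MvPolynomial (Fin (h - 1)) L)
    (hvan : ∃ ε : ℝ, 0 < ε ∧ ∀ a : F, ‖a‖ < ε →
      MvPolynomial.eval (fun i : Fin (h - 1) => algebraMap F L ((⇑σ)^[(i : ℕ) + 1] a)) P = 0) :
    P = 0 := by
  obtain ⟨ε, hε, hvan⟩ := hvan
  let _ : Algebra ℚ_[p] L := ((algebraMap F L).comp (algebraMap ℚ_[p] F)).toAlgebra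
  have : IsScalarTower ℚ_[p] F L := .of_algebraMap_eq fun _ => rfl
  have : Infinite L := .of_injective _ (algebraMap ℚ_[p] L).injective
  let g (i : Fin (h - 1)) : F →ₐ[ℚ_[p]] L :=
    (IsScalarTower.toAlgHom ℚ_[p] F L).comp (σ ^ ((i : ℕ) + 1)).toAlgHom
  have hg : Function.Injective fun i => (g i : F →* L) := by
    intro i j hij
    have hpow : σ ^ ((i : ℕ) + 1) = σ ^ ((j : ℕ) + 1) := AlgEquiv.ext fun a =>
      (algebraMap F L).injective (DFunLike.congr_fun hij a)
    have := pow_injOn_Iio_orderOf (x := σ) (by simp [hord]; omega) (by simp [hord]; omega) hpow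
    exact Fin.ext (by omega)
  have hnear : ∀ᶠ a in 𝓝 0, eval (fun i => g i a) P = 0 := by
    filter_upwards [Metric.ball_mem_nhds 0 hε] with a ha
    simpa [g] using hvan a (mem_ball_zero_iff.1 ha)
  have hspan := Submodule.span_range_monoidHom_eval_eq_top hg
  refine MvPolynomial.funext fun y => ?_
  rw [map_zero]
  exact eval_eq_zero_of_mem_span_of_eventually g hnear (hspan ▸ Submodule.mem_top)

/-- Let `F` be the unramified extension of `ℚ_p` of degree `h` inside
`ℂ_p` (modelled by a normed field `F` with `[F : ℚ_p] = h` and an automorphism `σ` of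
order `h`, the Frobenius), and let `L` be a field containing `F` (modelling `ℂ_p`).
A homogeneous polynomial of degree `m` in `h-1` variables with coefficients in `L` that
vanishes at `(σ^1(a), …, σ^{h-1}(a))` for all `a` in a neighborhood of `0` in `𝒪_F` is
identically zero. -/
theorem stmt10 (p : ℕ) [Fact p.Prime] (h : ℕ) (hh : 2 ≤ h)
    (F : Type*) [NormedField F] [NormedAlgebra ℚ_[p] F]
    [FiniteDimensional ℚ_[p] F] (hdeg : Module.finrank ℚ_[p] F = h)
    (σ : F ≃ₐ[ℚ_[p]] F) (hord : orderOf σ = h)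
    (L : Type*) [Field L] [Algebra F L]
    (P : MvPolynomial (Fin (h - 1)) L) (m : ℕ) (hhom : P.IsHomogeneous m)
    (hvan : ∃ ε : ℝ, 0 < ε ∧ ∀ a : F, ‖a‖ < ε →
      MvPolynomial.eval (fun i : Fin (h - 1) => algebraMap F L ((⇑σ)^[(i : ℕ) + 1] a)) P = 0) :
    P = 0 :=
  stmt10_general p h F σ hord L P hvan
end

section
/- If M is a crystalline (φ_q, Γ_F)-module over R(Y) of rank d, then the natural map R(Y)[1/t] ⊗_F D_cris(M) → R(Y)[1/t] ⊗_{R(Y)} M is an isomorphism, where D_cris(M) = (R(Y)[1/t] ⊗_{R(Y)} M)^{Γ_F}. -/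
/-!
Γ-invariant vectors that are independent over `F` stay independent over `R`: in a relation of
minimal support, twisting by `g` and eliminating one coefficient gives a shorter relation, so all
ratios of coefficients are Γ-invariant fractions, i.e. lie in `F`. Hence an `F`-basis of
`D_cris` gives `d` independent invariants `e` in the free rank-`d` module `N`. Semilinearity gives
`det e = det (A_g b) · g (det e)` in a basis `b` of `N`, so `det e` generates a nonzero Γ-stable
principal ideal; it is therefore a unit, and `e` is a basis of `N`.
-/

open Module

theorem Module.Basis.det_ne_zero_of_linearIndependent {R M ι : Type*} [CommRing R] [IsDomain R]
    [AddCommGroup M] [Module R M] [Fintype ι] [DecidableEq ι] (b : Basis ι R M) {v : ι → M}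
    (hv : LinearIndependent R v) : b.det v ≠ 0 := by
  rw [b.det_apply]
  intro h
  obtain ⟨w, hw, hPw⟩ := Matrix.exists_mulVec_eq_zero_iff.2 h
  refine hw (funext (Fintype.linearIndependent_iff.1 hv w (b.repr.injective ?_)))
  ext k
  have := congrFun hPw k
  simp only [Matrix.mulVec, dotProduct, b.toMatrix_apply] at this
  simpa [Finsupp.finsetSum_apply, mul_comm] using this

theorem Module.Basis.toMatrix_comp_semilinear {R M ι : Type*} [CommRing R] [AddCommGroup M]
    [Module R M] [Fintype ι] (b : Basis ι R M) (σ : R →+* R) (f : M →+ M)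
    (hf : ∀ (r : R) (x : M), f (r • x) = σ r • f x) (v : ι → M) :
    b.toMatrix (f ∘ v) = b.toMatrix (f ∘ b) * (b.toMatrix v).map σ := by
  ext k j
  have hfv : f (v j) = ∑ i, σ (b.toMatrix v i j) • f (b i) := by
    conv_lhs => rw [← b.sum_toMatrix_smul_self v j, map_sum]
    simp only [hf]
  simp [b.toMatrix_apply, hfv, Matrix.mul_apply, mul_comm]

theorem Module.Basis.det_comp_semilinear {R M ι : Type*} [CommRing R] [AddCommGroup M]
    [Module R M] [Fintype ι] [DecidableEq ι] (b : Basis ι R M) (σ : R →+* R) (f : M →+ M)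
    (hf : ∀ (r : R) (x : M), f (r • x) = σ r • f x) (v : ι → M) :
    b.det (f ∘ v) = b.det (f ∘ b) * σ (b.det v) := by
  rw [b.det_apply, b.det_apply, b.det_apply, b.toMatrix_comp_semilinear σ f hf, Matrix.det_mul,
    σ.map_det, RingHom.mapMatrix_apply]

theorem Ideal.span_singleton_smul_eq_of_forall_smul_dvd {R G : Type*} [CommRing R] [Group G]
    [MulSemiringAction G R] {x : R} (h : ∀ g : G, g • x ∣ x) (g : G) :
    Ideal.span {g • x} = Ideal.span {x} := by
  refine le_antisymm (Ideal.span_singleton_le_span_singleton.2 ?_)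
    (Ideal.span_singleton_le_span_singleton.2 (h g))
  simpa using map_dvd (MulSemiringAction.toRingHom G R g) (h g⁻¹)

theorem Submodule.finite_of_linearIndependent_coe {F R N : Type*} [DivisionRing F] [Ring R]
    [StrongRankCondition R] [AddCommGroup N] [Module F N] [Module R N] [Module.Finite R N]
    (D : Submodule F N)
    (hD : ∀ s : Finset D, LinearIndependent F (fun i : s => (i : D)) →
      LinearIndependent R (fun i : s => ((i : D) : N))) :
    Module.Finite F D := by
  refine Module.rank_lt_aleph0_iff.1 ((_root_.rank_le (n := finrank R N) fun s hs => ?_).trans_lt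
    Cardinal.natCast_lt_aleph0)
  simpa using (hD s hs).fintype_card_le_finrank

section InvariantDescent

variable {F R N Γ : Type*} [CommRing R] [AddCommGroup N] [Module R N] [Monoid Γ]
  [MulSemiringAction Γ R] (A : Γ → N →+ N)

theorem sum_smul_smul_eq_zero_of_invariant
    (hsemi : ∀ (g : Γ) (r : R) (x : N), A g (r • x) = (g • r) • A g x)
    {ι : Type*} {v : ι → N} (hinv : ∀ g i, A g (v i) = v i) {s : Finset ι} {c : ι → R}
    (hc : ∑ i ∈ s, c i • v i = 0) (g : Γ) :
    ∑ i ∈ s, (g • c i) • v i = 0 := by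
  simpa [map_sum, hsemi, hinv] using congrArg (A g) hc

theorem linearIndependent_of_invariant [CommRing F] [Algebra F R] [Module F N]
    [IsScalarTower F R N] [IsDomain R] [Module.IsTorsionFree R N]
    (hsemi : ∀ (g : Γ) (r : R) (x : N), A g (r • x) = (g • r) • A g x)
    (hfrac : ∀ a b : R, b ≠ 0 → (∀ g : Γ, (g • a) * b = a * (g • b)) →
      ∃ c : F, a = algebraMap F R c * b)
    {ι : Type*} {v : ι → N} (hinv : ∀ g i, A g (v i) = v i) (hv : LinearIndependent F v) :
    LinearIndependent R v := by
  classical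
  rw [linearIndependent_iff'] at hv ⊢
  intro s
  induction s using Finset.strongInduction with
  | H s ih =>
  intro c hc i₀ hi₀
  by_contra hc₀
  have hratio : ∀ i ∈ s, ∀ g : Γ, (g • c i) * c i₀ = c i * (g • c i₀) := by
    intro i hi g
    have hshorter : ∑ j ∈ s.erase i₀, (c i₀ * g • c j - g • c i₀ * c j) • v j = 0 := by
      rw [Finset.sum_erase _ (by rw [mul_comm, sub_self, zero_smul])]
      simp only [sub_smul, mul_smul, Finset.sum_sub_distrib, ← Finset.smul_sum, hc,
        sum_smul_smul_eq_zero_of_invariant A hsemi hinv hc g, smul_zero, sub_zero]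
    by_cases hi₀' : i = i₀
    · rw [hi₀', mul_comm]
    · have := ih _ (Finset.erase_ssubset hi₀) _ hshorter i (Finset.mem_erase.2 ⟨hi₀', hi⟩)
      linear_combination this
  choose! e he using fun i hi => hfrac (c i) (c i₀) hc₀ (hratio i hi)
  have hrelF : ∑ i ∈ s, e i • v i = 0 := by
    refine smul_right_injective N hc₀ ?_
    calc c i₀ • ∑ i ∈ s, e i • v i = ∑ i ∈ s, c i • v i := by
          rw [Finset.smul_sum]
          refine Finset.sum_congr rfl fun i hi => ?_
          rw [← algebraMap_smul R (e i) (v i), smul_smul, mul_comm, ← he i hi]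
      _ = c i₀ • 0 := by rw [hc, smul_zero]
  exact hc₀ (by rw [he i₀ hi₀, hv s e hrelF i₀ hi₀, map_zero, zero_mul])

theorem Submodule.linearIndependent_coe_of_invariant [CommRing F] [Algebra F R] [Module F N]
    [IsScalarTower F R N] [IsDomain R] [Module.IsTorsionFree R N]
    (hsemi : ∀ (g : Γ) (r : R) (x : N), A g (r • x) = (g • r) • A g x)
    (hfrac : ∀ a b : R, b ≠ 0 → (∀ g : Γ, (g • a) * b = a * (g • b)) →
      ∃ c : F, a = algebraMap F R c * b)
    {D : Submodule F N} (hD : ∀ x ∈ D, ∀ g, A g x = x) {ι : Type*} {v : ι → D}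
    (hv : LinearIndependent F v) :
    LinearIndependent R (fun i => (v i : N)) :=
  linearIndependent_of_invariant A hsemi hfrac (fun g i => hD _ (v i).2 g)
    (hv.map' D.subtype D.ker_subtype)

end InvariantDescent

theorem span_range_eq_top_of_invariant {R N Γ ι : Type*} [CommRing R] [IsDomain R] [AddCommGroup N]
    [Module R N] [Group Γ] [MulSemiringAction Γ R] [Fintype ι] [DecidableEq ι] (A : Γ → N →+ N)
    (hsemi : ∀ (g : Γ) (r : R) (x : N), A g (r • x) = (g • r) • A g x)
    (hunit : ∀ x : R, x ≠ 0 → (∀ g : Γ, Ideal.span {g • x} = Ideal.span {x}) → IsUnit x)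
    (b : Basis ι R N) {e : ι → N} (he : LinearIndependent R e) (hinv : ∀ g i, A g (e i) = e i) :
    Submodule.span R (Set.range e) = ⊤ := by
  have hdvd : ∀ g : Γ, g • b.det e ∣ b.det e := fun g =>
    ⟨b.det (A g ∘ b), by
      have hfix : A g ∘ e = e := funext (hinv g)
      simpa [hfix, mul_comm] using
        b.det_comp_semilinear (MulSemiringAction.toRingHom Γ R g) (A g) (hsemi g) e⟩
  exact ((b.is_basis_iff_det).2 (hunit _ (b.det_ne_zero_of_linearIndependent he)
    (Ideal.span_singleton_smul_eq_of_forall_smul_dvd hdvd))).2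

theorem stmt19_general (F : Type*) [Field F]
    (Rt : Type*) [CommRing Rt] [IsDomain Rt] [Algebra F Rt]
    (N : Type*) [AddCommGroup N] [Module Rt N] [Module F N] [IsScalarTower F Rt N]
    (Γ : Type*) [Group Γ] [MulSemiringAction Γ Rt]
    (A : Γ → N ≃+ N)
    (hsemi : ∀ (g : Γ) (r : Rt) (x : N), A g (r • x) = (g • r) • A g x)
    (d : ℕ) (bN : Module.Basis (Fin d) Rt N)
    (Dcris : Submodule F N)
    (hDc : ∀ x : N, x ∈ Dcris ↔ ∀ g : Γ, A g x = x)
    (hdim : Module.finrank F Dcris = d)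
    (hfrac : ∀ a b : Rt, b ≠ 0 → (∀ g : Γ, (g • a) * b = a * (g • b)) →
      ∃ c : F, a = algebraMap F Rt c * b)
    (hstabunit : ∀ x : Rt, x ≠ 0 →
      (∀ g : Γ, Ideal.span {g • x} = Ideal.span {x}) → IsUnit x) :
    (∀ (ι : Type) (v : ι → Dcris), LinearIndependent F v →
      LinearIndependent Rt (fun i => (v i : N))) ∧
    Submodule.span Rt (Dcris : Set N) = ⊤ := by
  have : Module.Free Rt N := .of_basis bN
  have : Module.Finite Rt N := .of_basis bN
  let A' : Γ → N →+ N := fun g => (A g).toAddMonoidHom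
  have hinv : ∀ x ∈ Dcris, ∀ g, A' g x = x := fun x hx => (hDc x).1 hx
  refine ⟨fun _ _ => Submodule.linearIndependent_coe_of_invariant A' hsemi hfrac hinv, ?_⟩
  have : Module.Finite F Dcris := Dcris.finite_of_linearIndependent_coe fun _ =>
    Submodule.linearIndependent_coe_of_invariant A' hsemi hfrac hinv
  let bD := Module.finBasisOfFinrankEq F Dcris hdim
  have hspan := span_range_eq_top_of_invariant A' hsemi hstabunit bN
    (Submodule.linearIndependent_coe_of_invariant A' hsemi hfrac hinv bD.linearIndependent)
    (fun g i => hinv _ (bD i).2 g)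
  rw [eq_top_iff, ← hspan]
  exact Submodule.span_mono (Set.range_subset_iff.2 fun i => (bD i).2)

/-- If `M` is a crystalline `(φ_q, Γ_F)`-module over `R(Y)` of rank `d`,
then the natural map `R(Y)[1/t] ⊗_F D_cris(M) → R(Y)[1/t] ⊗_{R(Y)} M` is an isomorphism,
where `D_cris(M) = (R(Y)[1/t] ⊗_{R(Y)} M)^{Γ_F}`.

Here `Rt` models the domain `R(Y)[1/t]` with its `Γ_F`-action, `N` models
`R(Y)[1/t] ⊗_{R(Y)} M` — free of rank `d` over `Rt` (a consequence of the crystallinity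
conditions (1),(2), since each `f_j` divides a power of `t`) with a semilinear
`Γ`-action `A` — and `Dcris` is the `F`-subspace of `Γ`-invariants, of dimension `d`
(crystallinity condition (3)).  The hypotheses `hfrac` and `hstabunit` record
`Frac(R(Y))^{Γ_F} = F` (lemma `invfro`) and the classification of `Γ`-stable principal
ideals (proposition `idealgam`: such an ideal of `R(Y)[1/t]` is the unit ideal).  The
conclusion — bijectivity of the natural map `Rt ⊗_F Dcris → N`, `r ⊗ x ↦ r • x` — is
expressed equivalently: every `F`-linearly independent family in `Dcris` is
`Rt`-linearly independent in `N` (injectivity), and `Dcris` spans `N` over `Rt`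
(surjectivity). -/
theorem stmt19 (F : Type*) [Field F]
    (Rt : Type*) [CommRing Rt] [IsDomain Rt] [Algebra F Rt]
    (N : Type*) [AddCommGroup N] [Module Rt N] [Module F N] [IsScalarTower F Rt N]
    (Γ : Type*) [Group Γ] [MulSemiringAction Γ Rt]
    (hFfix : ∀ (g : Γ) (c : F), g • algebraMap F Rt c = algebraMap F Rt c)
    (A : Γ → N ≃+ N)
    (hA1 : ∀ (g₁ g₂ : Γ) (x : N), A (g₁ * g₂) x = A g₁ (A g₂ x))
    (hsemi : ∀ (g : Γ) (r : Rt) (x : N), A g (r • x) = (g • r) • A g x)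
    (d : ℕ) (bN : Module.Basis (Fin d) Rt N)
    (Dcris : Submodule F N)
    (hDc : ∀ x : N, x ∈ Dcris ↔ ∀ g : Γ, A g x = x)
    (hdim : Module.finrank F Dcris = d)
    (hfrac : ∀ a b : Rt, b ≠ 0 → (∀ g : Γ, (g • a) * b = a * (g • b)) →
      ∃ c : F, a = algebraMap F Rt c * b)
    (hstabunit : ∀ x : Rt, x ≠ 0 →
      (∀ g : Γ, Ideal.span {g • x} = Ideal.span {x}) → IsUnit x) :
    (∀ (ι : Type) (v : ι → Dcris), LinearIndependent F v →
      LinearIndependent Rt (fun i => (v i : N))) ∧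
    Submodule.span Rt (Dcris : Set N) = ⊤ :=
  stmt19_general F Rt N Γ A hsemi d bN Dcris hDc hdim hfrac hstabunit
end
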